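/- arXiv:2008.05328 — 5 statements merged into one kernel-verified Lean document; each statement's English description precedes it below -/
import Mathlib

section
/- Let X, Y ∈ P_{2n} be symmetric positive definite 2n×2n matrices such that X^{-1}J and Y^{-1}J are similar matrices. Then there exists S ∈ Sp~(2n;ℝ) with Y = SᵀXS. -/
open Matrix

/-- The standard symplectic matrix `J = [[0, Id],[-Id, 0]]`. -/
def sympJ (n : ℕ) : Matrix (Fin n ⊕ Fin n) (Fin n ⊕ Fin n) ℝ :=
  Matrix.fromBlocks 0 1 (-1) 0

/-- `Sp~(2n;ℝ)`: invertible matrices with `AᵀJA = ±J`. -/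
def SpTilde (n : ℕ) : Set (Matrix (Fin n ⊕ Fin n) (Fin n ⊕ Fin n) ℝ) :=
  {A | IsUnit A.det ∧ (Aᵀ * sympJ n * A = sympJ n ∨ Aᵀ * sympJ n * A = -sympJ n)}

/-!
Write `X = R²` and `Y = Q²` with `R`, `Q` the positive square roots. Then `A = R⁻¹JR⁻¹` and
`B = Q⁻¹JQ⁻¹` are skew-Hermitian, and the similarity `P` yields `T = RPQ⁻¹` with `AT = TB`.
Taking adjoints gives `T*A = BT*`, so `B` commutes with `T*T` and hence with its square root
`H`; the unitary polar factor `U = TH⁻¹` therefore still satisfies `AU = UB`.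
Then `S = R⁻¹UQ` satisfies `S*JS = QU*AUQ = QBQ = J` and `S*XS = QU*UQ = Y`.
-/

open scoped MatrixOrder ComplexOrder

section StarRing

variable {R : Type*} [Ring R] [StarRing R]

theorem commute_star_mul_self_of_mul_eq_mul {a b t : R}
    (ha : star a = -a) (hb : star b = -b) (h : a * t = t * b) :
    Commute b (star t * t) := by
  have h' : star t * a = b * star t := by
    simpa [ha, hb] using congrArg star h
  rw [Commute, SemiconjBy, ← mul_assoc, ← h', mul_assoc, h, mul_assoc]

end StarRing

namespace Matrix

variable {𝕜 m : Type*} [RCLike 𝕜] [Fintype m] [DecidableEq m]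

theorem PosDef.exists_unit_sqrt {X : Matrix m m 𝕜} (hX : X.PosDef) :
    ∃ R : (Matrix m m 𝕜)ˣ, star R = R ∧ R * R = X ∧ ∀ B, Commute B X → Commute B ↑R := by
  obtain ⟨R, hR⟩ := (CFC.isUnit_sqrt_iff X hX.posSemidef.nonneg).2 hX.isUnit
  refine ⟨R, Units.ext ?_, ?_, fun B hB => ?_⟩
  · rw [Units.coe_star, hR]
    exact (CFC.sqrt_nonneg X).isSelfAdjoint
  · rw [hR]
    exact CFC.sqrt_mul_sqrt_self X hX.posSemidef.nonneg
  · rw [hR, CFC.sqrt_eq_cfc]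
    exact (hB.symm.cfc_nnreal _).symm

theorem exists_mem_unitaryGroup_mul_eq_mul_of_commute {A B T : Matrix m m 𝕜}
    (hT : IsUnit T) (h : A * T = T * B) (hB : Commute B (star T * T)) :
    ∃ U ∈ unitaryGroup m 𝕜, A * U = U * B := by
  have hTT : (star T * T).PosDef :=
    PosDef.conjTranspose_mul_self T (mulVec_injective_iff_isUnit.2 hT)
  obtain ⟨H, hH, hHH, hBH⟩ := hTT.exists_unit_sqrt
  refine ⟨T * H⁻¹.val, mem_unitaryGroup_iff'.2 ?_, ?_⟩
  · rw [star_mul, ← Units.coe_star_inv, hH, mul_assoc, ← mul_assoc (star T), ← hHH]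
    simp only [mul_assoc, Units.inv_mul_cancel_left, Units.mul_inv]
  · rw [← mul_assoc, h, mul_assoc, (hBH B hB).units_inv_right.eq, mul_assoc]

theorem exists_mem_unitaryGroup_mul_eq_mul_of_skew {A B T : Matrix m m 𝕜}
    (hA : star A = -A) (hB : star B = -B) (hT : IsUnit T) (h : A * T = T * B) :
    ∃ U ∈ unitaryGroup m 𝕜, A * U = U * B :=
  exists_mem_unitaryGroup_mul_eq_mul_of_commute hT h (commute_star_mul_self_of_mul_eq_mul hA hB h)

theorem PosDef.exists_congr_of_inv_mul_similar {X Y J P : Matrix m m 𝕜}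
    (hX : X.PosDef) (hY : Y.PosDef) (hJ : star J = -J) (hP : IsUnit P)
    (h : X⁻¹ * J * P = P * (Y⁻¹ * J)) :
    ∃ S : Matrix m m 𝕜, IsUnit S ∧ star S * J * S = J ∧ star S * X * S = Y := by
  obtain ⟨R, hR, rfl, -⟩ := hX.exists_unit_sqrt
  obtain ⟨Q, hQ, rfl, -⟩ := hY.exists_unit_sqrt
  obtain ⟨P, rfl⟩ := hP
  simp only [Matrix.mul_inv_rev, ← coe_units_inv] at h
  have star_inv : ∀ V : (Matrix m m 𝕜)ˣ, star V = V → star V⁻¹.val = V⁻¹ :=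
    fun V hV => by rw [← Units.coe_star_inv, hV]
  have skew : ∀ V : (Matrix m m 𝕜)ˣ, star V = V →
      star (V⁻¹.val * J * V⁻¹) = -(V⁻¹.val * J * V⁻¹) :=
    fun V hV => by simp only [star_mul, star_inv V hV, hJ, mul_neg, neg_mul, mul_assoc]
  obtain ⟨U, hU, hAU⟩ := exists_mem_unitaryGroup_mul_eq_mul_of_skew (skew R hR) (skew Q hQ)
    (T := R * P * Q⁻¹) (Units.isUnit _) (by
      have := congrArg (fun M => R.val * M * Q⁻¹) h
      simpa only [Units.val_mul, mul_assoc, Units.inv_mul_cancel_left,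
        Units.mul_inv_cancel_left] using this)
  have hUU : star U * U = 1 := mem_unitaryGroup_iff'.1 hU
  have hQs : star Q.val = Q := by rw [← Units.coe_star, hQ]
  refine ⟨R⁻¹.val * U * Q, ?_, ?_, ?_⟩
  · exact ((Units.isUnit _).mul (Unitary.isUnit_coe (U := ⟨U, hU⟩))).mul (Units.isUnit _)
  · calc star (R⁻¹.val * U * Q) * J * (R⁻¹.val * U * Q)
        = Q * (star U * ((R⁻¹.val * J * R⁻¹) * U)) * Q := by
          simp only [star_mul, star_inv R hR, hQs, mul_assoc]
      _ = J := by
          rw [hAU, ← mul_assoc (star U), hUU, one_mul]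
          simp only [mul_assoc, Units.mul_inv_cancel_left, Units.inv_mul, mul_one]
  · calc star (R⁻¹.val * U * Q) * (R * R) * (R⁻¹.val * U * Q)
        = Q * (star U * U) * Q := by
          simp only [star_mul, star_inv R hR, hQs, mul_assoc, Units.inv_mul_cancel_left,
            Units.mul_inv_cancel_left]
      _ = Q * Q := by rw [hUU, mul_one]

end Matrix

theorem sympJ_transpose (n : ℕ) : (sympJ n)ᵀ = -sympJ n := by
  simp [sympJ, fromBlocks_transpose, fromBlocks_neg]

theorem similar_implies_symp_orbit (n : ℕ)
    (X Y : Matrix (Fin n ⊕ Fin n) (Fin n ⊕ Fin n) ℝ)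
    (hX : X.PosDef) (hY : Y.PosDef)
    (hsim : ∃ P : Matrix (Fin n ⊕ Fin n) (Fin n ⊕ Fin n) ℝ, IsUnit P.det ∧
      X⁻¹ * sympJ n = P * (Y⁻¹ * sympJ n) * P⁻¹) :
    ∃ S ∈ SpTilde n, Y = Sᵀ * X * S := by
  obtain ⟨P, hP, hsim⟩ := hsim
  -- over `ℝ`, `star` on matrices is definitionally the transpose
  obtain ⟨S, hS, hSJ, hSX⟩ := hX.exists_congr_of_inv_mul_similar (J := sympJ n) hY (sympJ_transpose n)
    ((isUnit_iff_isUnit_det P).2 hP) (by rw [hsim, nonsing_inv_mul_cancel_right _ _ hP])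
  exact ⟨S, ⟨(isUnit_iff_isUnit_det S).1 hS, Or.inl hSJ⟩, hSX.symm⟩
end

section
/- For all symmetric positive definite 2n×2n matrices Y and all G ∈ GL(2n;ℝ), d_n(GᵀG)·λ_{2n}(Y)^{-1} ≤ d_n(GᵀYG), where d_n(M) denotes the largest absolute value of an eigenvalue of M^{-1}J for M ∈ P_{2n}, and λ_{2n}(Y) is the largest eigenvalue of Y. -/
open Matrix

/-- `d_n(M)`: the largest absolute value of an eigenvalue of `M⁻¹ * J`. -/
noncomputable def dMax (n : ℕ) (M : Matrix (Fin n ⊕ Fin n) (Fin n ⊕ Fin n) ℝ) : ℝ :=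
  sSup ((fun z : ℂ => ‖z‖) '' spectrum ℂ ((M⁻¹ * sympJ n).map Complex.ofReal))

/-- The largest eigenvalue of a symmetric positive definite matrix. -/
noncomputable def lamMax (n : ℕ) (Y : Matrix (Fin n ⊕ Fin n) (Fin n ⊕ Fin n) ℝ) : ℝ :=
  sSup (spectrum ℝ Y)

/-! Write `Y = RᵀR`. For invertible `S`, the matrix `(SᵀS)⁻¹J` is similar (via `S`) to the
congruence `S⁻ᵀJS⁻¹`, which is skew-symmetric and hence normal, so `d_n(SᵀS) = ‖S⁻ᵀJS⁻¹‖` for the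
operator norm of the complexification. For `S = G` and `S = RG` the two congruences `K` and `B`
satisfy `K = RᵀBR`, whence `‖K‖ ≤ ‖R‖²‖B‖ = ‖Y‖‖B‖ ≤ λ_max(Y)‖B‖`. -/

open scoped Matrix.Norms.L2Operator MatrixOrder

lemma IsStarNormal.sSup_norm_spectrum_eq_norm {A : Type*} [CStarAlgebra A] (a : A)
    [IsStarNormal a] : sSup ((fun z : ℂ => ‖z‖) '' spectrum ℂ a) = ‖a‖ := by
  rcases subsingleton_or_nontrivial A with _ | _
  · simp [spectrum.of_subsingleton, Subsingleton.elim a 0]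
  obtain ⟨z, hz, hz_norm⟩ :=
    spectrum.exists_nnnorm_eq_spectralRadius_of_nonempty (spectrum.nonempty (A := A) a)
  rw [IsStarNormal.spectralRadius_eq_nnnorm, ENNReal.coe_inj] at hz_norm
  refine IsGreatest.csSup_eq ⟨⟨z, hz, congrArg NNReal.toReal hz_norm⟩, ?_⟩
  rintro _ ⟨w, hw, rfl⟩
  exact spectrum.norm_le_norm_of_mem hw

namespace Matrix

lemma map_ofReal_transpose {m n : Type*} (A : Matrix m n ℝ) :
    Aᵀ.map Complex.ofReal = (A.map Complex.ofReal)ᴴ := by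
  rw [← conjTranspose_eq_transpose_of_trivial,
    conjTranspose_map _ fun x => (Complex.conj_ofReal x).symm]

variable {m : Type*} [Fintype m]

lemma map_ofReal_mul (A B : Matrix m m ℝ) :
    (A * B).map Complex.ofReal = A.map Complex.ofReal * B.map Complex.ofReal :=
  Matrix.map_mul (f := Complex.ofRealHom)

variable [DecidableEq m]

lemma map_nonsing_inv {K L : Type*} [Field K] [Field L] (f : K →+* L) (A : Matrix m m K) :
    A⁻¹.map f = (A.map f)⁻¹ := by
  by_cases hA : IsUnit A.det
  · refine (inv_eq_left_inv ?_).symm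
    rw [← Matrix.map_mul, nonsing_inv_mul _ hA, Matrix.map_one f (map_zero f) (map_one f)]
  · have hfA : ¬IsUnit (A.map f).det := by
      rwa [← RingHom.mapMatrix_apply, ← RingHom.map_det, isUnit_map_iff]
    rw [nonsing_inv_apply_not_isUnit _ hA, nonsing_inv_apply_not_isUnit _ hfA,
      Matrix.map_zero _ (map_zero f)]

lemma map_ofReal_inv (A : Matrix m m ℝ) :
    A⁻¹.map Complex.ofReal = (A.map Complex.ofReal)⁻¹ :=
  map_nonsing_inv Complex.ofRealHom A

lemma isUnit_det_map_ofReal {A : Matrix m m ℝ} (hA : IsUnit A.det) :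
    IsUnit (A.map Complex.ofReal).det := by
  change IsUnit (Complex.ofRealHom.mapMatrix A).det
  rwa [← RingHom.map_det, isUnit_map_iff]

lemma spectrum_inv_conjTranspose_mul_self_mul {𝕜 : Type*} [Field 𝕜] [StarRing 𝕜]
    {S : Matrix m m 𝕜} (hS : IsUnit S.det) (A : Matrix m m 𝕜) :
    spectrum 𝕜 ((Sᴴ * S)⁻¹ * A) = spectrum 𝕜 (S⁻¹ᴴ * A * S⁻¹) := by
  have hconj : (Sᴴ * S)⁻¹ * A = S⁻¹ * (S⁻¹ᴴ * A * S⁻¹) * S := by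
    rw [mul_inv_rev, conjTranspose_nonsing_inv]
    simp only [Matrix.mul_assoc, nonsing_inv_mul _ hS, Matrix.mul_one]
  rw [hconj]
  exact spectrum.units_conjugate' (u := nonsingInvUnit S hS)

lemma norm_le_norm_conjTranspose_mul_self_mul {𝕜 : Type*} [RCLike 𝕜] {T : Matrix m m 𝕜}
    (hT : IsUnit T.det) (X : Matrix m m 𝕜) :
    ‖X‖ ≤ ‖Tᴴ * T‖ * ‖T⁻¹ᴴ * X * T⁻¹‖ := by
  have hX : X = Tᴴ * (T⁻¹ᴴ * X * T⁻¹) * T := by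
    rw [← Matrix.mul_assoc, ← Matrix.mul_assoc, ← conjTranspose_mul, nonsing_inv_mul _ hT,
      conjTranspose_one, Matrix.one_mul, Matrix.mul_assoc, nonsing_inv_mul _ hT, Matrix.mul_one]
  have hTT : ‖Tᴴ * T‖ = ‖Tᴴ‖ * ‖T‖ := by
    rw [← star_eq_conjTranspose, CStarRing.norm_star_mul_self, norm_star]
  calc ‖X‖ = ‖Tᴴ * (T⁻¹ᴴ * X * T⁻¹) * T‖ := congrArg _ hX
    _ ≤ ‖Tᴴ‖ * ‖T⁻¹ᴴ * X * T⁻¹‖ * ‖T‖ := norm_mul₃_le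
    _ = ‖Tᴴ * T‖ * ‖T⁻¹ᴴ * X * T⁻¹‖ := by rw [hTT]; ring

lemma norm_map_ofReal_le_sSup_spectrum {Y : Matrix m m ℝ} (hY : 0 ≤ Y.map Complex.ofReal) :
    ‖Y.map Complex.ofReal‖ ≤ sSup (spectrum ℝ Y) := by
  rcases isEmpty_or_nonempty m with _ | _
  · simp [spectrum.of_subsingleton, Subsingleton.elim (Y.map Complex.ofReal) 0]
  have hmem : ‖Y.map Complex.ofReal‖ ∈ spectrum ℝ Y :=
    AlgHom.spectrum_apply_subset (Complex.ofRealAm.mapMatrix (m := m)) Y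
      (CStarAlgebra.norm_mem_spectrum_of_nonneg hY)
  exact le_csSup Y.finite_spectrum.bddAbove hmem

lemma PosDef.exists_isUnit_det_transpose_mul_self_eq {Y : Matrix m m ℝ} (hY : Y.PosDef) :
    ∃ R : Matrix m m ℝ, IsUnit R.det ∧ Rᵀ * R = Y := by
  have hY0 : 0 ≤ Y := hY.posSemidef.nonneg
  refine ⟨CFC.sqrt Y, ?_, ?_⟩
  · rw [← isUnit_iff_isUnit_det, CFC.isUnit_sqrt_iff Y hY0]
    exact hY.isUnit
  · rw [← conjTranspose_eq_transpose_of_trivial,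
      (nonneg_iff_posSemidef.mp (CFC.sqrt_nonneg Y)).isHermitian.eq, CFC.sqrt_mul_sqrt_self Y hY0]

end Matrix

open Matrix

lemma conjTranspose_map_ofReal_sympJ (n : ℕ) :
    ((sympJ n).map Complex.ofReal)ᴴ = -(sympJ n).map Complex.ofReal := by
  rw [← map_ofReal_transpose]
  ext (i | i) (j | j) <;> simp [sympJ, Matrix.one_apply, eq_comm]

lemma dMax_transpose_mul_self (n : ℕ) {S : Matrix (Fin n ⊕ Fin n) (Fin n ⊕ Fin n) ℝ}
    (hS : IsUnit S.det) :
    dMax n (Sᵀ * S) = ‖(S.map Complex.ofReal)⁻¹ᴴ * (sympJ n).map Complex.ofReal *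
      (S.map Complex.ofReal)⁻¹‖ := by
  have hskew : (S.map Complex.ofReal)⁻¹ᴴ * (sympJ n).map Complex.ofReal *
      (S.map Complex.ofReal)⁻¹ ∈ skewAdjoint _ := by
    rw [← star_eq_conjTranspose]
    exact skewAdjoint.conjugate' (skewAdjoint.mem_iff.mpr (conjTranspose_map_ofReal_sympJ n)) _
  have : IsStarNormal _ := skewAdjoint.isStarNormal_of_mem hskew
  rw [dMax, map_ofReal_mul, map_ofReal_inv, map_ofReal_mul, map_ofReal_transpose,
    spectrum_inv_conjTranspose_mul_self_mul (isUnit_det_map_ofReal hS),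
    IsStarNormal.sSup_norm_spectrum_eq_norm]

theorem dMax_key_inequality (n : ℕ)
    (Y G : Matrix (Fin n ⊕ Fin n) (Fin n ⊕ Fin n) ℝ)
    (hY : Y.PosDef) (hG : IsUnit G.det) :
    dMax n (Gᵀ * G) * (lamMax n Y)⁻¹ ≤ dMax n (Gᵀ * Y * G) := by
  obtain ⟨R, hR, rfl⟩ := hY.exists_isUnit_det_transpose_mul_self_eq
  have hRG : Gᵀ * (Rᵀ * R) * G = (R * G)ᵀ * (R * G) := by
    simp only [transpose_mul, Matrix.mul_assoc]
  rw [hRG, dMax_transpose_mul_self n hG,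
    dMax_transpose_mul_self n (by rw [det_mul]; exact hR.mul hG), map_ofReal_mul]
  set J := (sympJ n).map Complex.ofReal
  set Rc := R.map Complex.ofReal
  set Gc := G.map Complex.ofReal
  have hcongr : Rc⁻¹ᴴ * (Gc⁻¹ᴴ * J * Gc⁻¹) * Rc⁻¹ = (Rc * Gc)⁻¹ᴴ * J * (Rc * Gc)⁻¹ := by
    simp only [Matrix.mul_inv_rev, conjTranspose_mul, Matrix.mul_assoc]
  have hlam : ‖Rcᴴ * Rc‖ ≤ lamMax n (Rᵀ * R) := by
    rw [lamMax, ← map_ofReal_transpose, ← map_ofReal_mul]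
    refine norm_map_ofReal_le_sSup_spectrum ?_
    rw [map_ofReal_mul, map_ofReal_transpose, ← star_eq_conjTranspose]
    exact star_mul_self_nonneg _
  rw [← div_eq_mul_inv]
  refine div_le_of_le_mul₀ ((norm_nonneg _).trans hlam) (norm_nonneg _) ?_
  calc ‖Gc⁻¹ᴴ * J * Gc⁻¹‖ ≤ ‖Rcᴴ * Rc‖ * ‖(Rc * Gc)⁻¹ᴴ * J * (Rc * Gc)⁻¹‖ :=
        hcongr ▸ norm_le_norm_conjTranspose_mul_self_mul (isUnit_det_map_ofReal hR) _
    _ ≤ ‖(Rc * Gc)⁻¹ᴴ * J * (Rc * Gc)⁻¹‖ * lamMax n (Rᵀ * R) := by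
        rw [mul_comm]
        gcongr
end

section
/- Fix n ∈ ℕ, r ∈ D_n and let U ⊂ G_r be a set of matrices no two of which lie in the same left coset of Π_r (i.e. G ≠ H in U implies H^{-1}G ∉ Sp~(2n;ℝ)). Then for any C > 0, the set {G ∈ U : ‖G^{-ᵀ}JG^{-1}‖ ≤ C} is finite, for any matrix norm ‖·‖. -/
open Matrix

/-- The diagonal matrix `δ_r = diag(r_1,…,r_n,1,…,1)`. -/
def deltaR (n : ℕ) (r : Fin n → ℕ) : Matrix (Fin n ⊕ Fin n) (Fin n ⊕ Fin n) ℝ :=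
  Matrix.fromBlocks (Matrix.diagonal fun i => (r i : ℝ)) 0 0 1

/-- The group `G_r = δ_r GL(2n;ℤ) δ_r⁻¹` as a set of real matrices. -/
def GrSet (n : ℕ) (r : Fin n → ℕ) : Set (Matrix (Fin n ⊕ Fin n) (Fin n ⊕ Fin n) ℝ) :=
  {G | ∃ A : Matrix (Fin n ⊕ Fin n) (Fin n ⊕ Fin n) ℤ, IsUnit A.det ∧
    G = deltaR n r * A.map (Int.cast) * (deltaR n r)⁻¹}


/-!
Write `G = δ A δ⁻¹` with `A ∈ GL(2n, ℤ)`. Then `δ (G⁻ᵀ J G⁻¹) δ = A⁻ᵀ (δ J δ) A⁻¹` is an integer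
matrix, so the forms `G⁻ᵀ J G⁻¹` lie in a lattice of matrices. In finite dimension every norm
bounds every linear functional, so only finitely many lattice points have norm `≤ C`. Finally
`G ↦ G⁻ᵀ J G⁻¹` is injective on `U`: equal forms for `G` and `H` mean that `H⁻¹ G` preserves `J`.
-/

structure IsNorm {V : Type*} [AddCommGroup V] [Module ℝ V] (N : V → ℝ) : Prop where
  eq_zero_iff : ∀ x, N x = 0 ↔ x = 0
  add_le : ∀ x y, N (x + y) ≤ N x + N y
  smul_eq : ∀ (c : ℝ) x, N (c • x) = |c| * N x

namespace IsNorm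

variable {V : Type*} [AddCommGroup V] [Module ℝ V] {N : V → ℝ}

/-- Not an instance: `V` may already carry another topology (for matrices, the product one). -/
abbrev toNormedAddCommGroup (hN : IsNorm N) : NormedAddCommGroup V :=
  AddGroupNorm.toNormedAddCommGroup
    { toFun := N
      map_zero' := (hN.eq_zero_iff 0).2 rfl
      add_le' := hN.add_le
      neg' := fun x => by simpa using hN.smul_eq (-1) x
      eq_zero_of_map_eq_zero' := fun x => (hN.eq_zero_iff x).1 }

lemma exists_abs_le_of_le [FiniteDimensional ℝ V] (hN : IsNorm N) (f : V →ₗ[ℝ] ℝ) (C : ℝ) :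
    ∃ B, ∀ x, N x ≤ C → |f x| ≤ B := by
  let _ := hN.toNormedAddCommGroup
  let _ : NormedSpace ℝ V := ⟨fun c x => (hN.smul_eq c x).le⟩
  let φ := LinearMap.toContinuousLinearMap f
  exact ⟨‖φ‖ * C, fun x hx => (φ.le_opNorm x).trans (by gcongr; exact hx)⟩

lemma finite_setOf_forall_int_and_le [FiniteDimensional ℝ V] {ι : Type*} [Finite ι]
    (hN : IsNorm N) (f : ι → V →ₗ[ℝ] ℝ) (hf : ∀ x y, (∀ i, f i x = f i y) → x = y) (C : ℝ) :
    {x | (∀ i, ∃ k : ℤ, f i x = k) ∧ N x ≤ C}.Finite := by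
  choose B hB using fun i => hN.exists_abs_le_of_le (f i) C
  refine Set.Finite.of_finite_image (f := fun x i => f i x) ?_
    fun x _ y _ hxy => hf x y (congrFun hxy)
  refine (Set.Finite.pi fun i => (Set.finite_Icc ⌈-B i⌉ ⌊B i⌋).image Int.cast).subset ?_
  rintro _ ⟨x, ⟨hint, hxC⟩, rfl⟩ i -
  obtain ⟨k, hk⟩ := hint i
  have hkB := abs_le.1 (hk ▸ hB i x hxC)
  exact ⟨k, ⟨Int.ceil_le.2 hkB.1, Int.le_floor.2 hkB.2⟩, hk.symm⟩

end IsNorm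

section Matrix

variable {m R : Type*} [Fintype m] [DecidableEq m] [CommRing R]

lemma transpose_mul_mul_eq_of_inv_eq {G H J : Matrix m m R} (hG : IsUnit G.det)
    (h : G⁻¹ᵀ * J * G⁻¹ = H⁻¹ᵀ * J * H⁻¹) : (H⁻¹ * G)ᵀ * J * (H⁻¹ * G) = J :=
  calc (H⁻¹ * G)ᵀ * J * (H⁻¹ * G) = Gᵀ * (H⁻¹ᵀ * J * H⁻¹) * G := by
        simp only [transpose_mul, Matrix.mul_assoc]
    _ = (G⁻¹ * G)ᵀ * J * (G⁻¹ * G) := by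
        simp only [← h, transpose_mul, Matrix.mul_assoc]
    _ = J := by rw [nonsing_inv_mul _ hG, transpose_one, Matrix.one_mul, Matrix.mul_one]

lemma map_intCast_nonsing_inv {A : Matrix m m ℤ} (hA : IsUnit A.det) :
    (A.map (Int.cast : ℤ → R))⁻¹ = A⁻¹.map Int.cast :=
  Matrix.inv_eq_left_inv <| by
    rw [← map_one (Int.castRingHom R).mapMatrix, ← nonsing_inv_mul A hA, map_mul]; rfl

lemma nonsing_inv_conj {P X : Matrix m m R} (hP : IsUnit P.det) :
    (P * X * P⁻¹)⁻¹ = P * X⁻¹ * P⁻¹ := by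
  rw [Matrix.mul_inv_rev, Matrix.mul_inv_rev, Matrix.nonsing_inv_nonsing_inv _ hP,
    Matrix.mul_assoc]

end Matrix

section SympForm

variable {n : ℕ} {r : Fin n → ℕ}

lemma deltaR_eq_map :
    deltaR n r = (fromBlocks (diagonal fun i => (r i : ℤ)) 0 0 1).map Int.cast := by
  simp [deltaR, fromBlocks_map, diagonal_map]

lemma sympJ_eq_map :
    sympJ n = (fromBlocks 0 1 (-1) 0 : Matrix (Fin n ⊕ Fin n) (Fin n ⊕ Fin n) ℤ).map Int.cast := by
  simp [sympJ, fromBlocks_map, Matrix.map_neg]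

lemma deltaR_transpose : (deltaR n r)ᵀ = deltaR n r := by
  simp [deltaR, fromBlocks_transpose]

lemma isUnit_det_deltaR (hr : ∀ i, r i ≠ 0) : IsUnit (deltaR n r).det := by
  simp [deltaR, Finset.prod_ne_zero_iff, hr]

lemma isUnit_det_of_mem_GrSet (hr : ∀ i, r i ≠ 0) {G : Matrix (Fin n ⊕ Fin n) (Fin n ⊕ Fin n) ℝ}
    (hG : G ∈ GrSet n r) : IsUnit G.det := by
  obtain ⟨A, hA, rfl⟩ := hG
  rw [det_mul, det_mul, ← Int.cast_det]
  exact ((isUnit_det_deltaR hr).mul (hA.map (Int.castRingHom ℝ))).mul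
    (isUnit_nonsing_inv_det _ (isUnit_det_deltaR hr))

lemma exists_map_eq_deltaR_mul_mul_deltaR (hr : ∀ i, r i ≠ 0)
    {G : Matrix (Fin n ⊕ Fin n) (Fin n ⊕ Fin n) ℝ} (hG : G ∈ GrSet n r) :
    ∃ K : Matrix (Fin n ⊕ Fin n) (Fin n ⊕ Fin n) ℤ,
      deltaR n r * (G⁻¹ᵀ * sympJ n * G⁻¹) * deltaR n r = K.map Int.cast := by
  obtain ⟨A, hA, rfl⟩ := hG
  have hδ := isUnit_det_deltaR hr
  set δ := deltaR n r with hδ_def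
  set B := A⁻¹
  refine ⟨Bᵀ * (fromBlocks (diagonal fun i => (r i : ℤ)) 0 0 1 * fromBlocks 0 1 (-1) 0 *
    fromBlocks (diagonal fun i => (r i : ℤ)) 0 0 1) * B, ?_⟩
  rw [nonsing_inv_conj hδ, map_intCast_nonsing_inv hA]
  calc δ * ((δ * B.map Int.cast * δ⁻¹)ᵀ * sympJ n * (δ * B.map Int.cast * δ⁻¹)) * δ
      = (δ * δ⁻¹) * (B.map Int.cast)ᵀ * (δ * sympJ n * δ) * B.map Int.cast * (δ⁻¹ * δ) := by
        simp only [transpose_mul, transpose_nonsing_inv, hδ_def, deltaR_transpose,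
          Matrix.mul_assoc]
    _ = (B.map Int.cast)ᵀ * (δ * sympJ n * δ) * B.map Int.cast := by
        rw [mul_nonsing_inv _ hδ, nonsing_inv_mul _ hδ, Matrix.one_mul, Matrix.mul_one]
    _ = _ := by
        rw [hδ_def, deltaR_eq_map, sympJ_eq_map, ← transpose_map]
        simp only [← Int.coe_castRingHom, ← RingHom.mapMatrix_apply, ← map_mul]

lemma injOn_inv_transpose_mul_sympJ_mul_inv
    {U : Set (Matrix (Fin n ⊕ Fin n) (Fin n ⊕ Fin n) ℝ)} (hdet : ∀ G ∈ U, IsUnit G.det)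
    (hpair : ∀ G ∈ U, ∀ H ∈ U, G ≠ H → H⁻¹ * G ∉ SpTilde n) :
    Set.InjOn (fun G => G⁻¹ᵀ * sympJ n * G⁻¹) U := by
  intro G hG H hH hGH
  by_contra hne
  refine hpair G hG H hH hne ⟨?_, .inl (transpose_mul_mul_eq_of_inv_eq (hdet G hG) hGH)⟩
  rw [det_mul]
  exact (isUnit_nonsing_inv_det _ (hdet H hH)).mul (hdet G hG)

end SympForm

theorem finitely_many_coset_reps_with_bounded_norm_general (n : ℕ)
    (r : Fin n → ℕ) (hr : ∀ i, 0 < r i)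
    (U : Set (Matrix (Fin n ⊕ Fin n) (Fin n ⊕ Fin n) ℝ)) (hU : U ⊆ GrSet n r)
    (hpair : ∀ G ∈ U, ∀ H ∈ U, G ≠ H → H⁻¹ * G ∉ SpTilde n)
    (N : Matrix (Fin n ⊕ Fin n) (Fin n ⊕ Fin n) ℝ → ℝ)
    (hN0 : ∀ A, N A = 0 ↔ A = 0)
    (hNadd : ∀ A B, N (A + B) ≤ N A + N B)
    (hNsmul : ∀ (c : ℝ) A, N (c • A) = |c| * N A)
    (C : ℝ) :
    {G ∈ U | N ((G⁻¹)ᵀ * sympJ n * G⁻¹) ≤ C}.Finite := by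
  have hr' : ∀ i, r i ≠ 0 := fun i => (hr i).ne'
  have hδ := (isUnit_iff_isUnit_det _).2 (isUnit_det_deltaR hr')
  have hdet : ∀ G ∈ U, IsUnit G.det := fun G hG => isUnit_det_of_mem_GrSet hr' (hU hG)
  have hinj := injOn_inv_transpose_mul_sympJ_mul_inv hdet hpair
  let f (p : (Fin n ⊕ Fin n) × (Fin n ⊕ Fin n)) :
      Matrix (Fin n ⊕ Fin n) (Fin n ⊕ Fin n) ℝ →ₗ[ℝ] ℝ :=
    entryLinearMap ℝ ℝ p.1 p.2 ∘ₗ LinearMap.mulRight ℝ (deltaR n r) ∘ₗ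
      LinearMap.mulLeft ℝ (deltaR n r)
  have hf : ∀ X Y, (∀ p, f p X = f p Y) → X = Y := fun X Y hXY =>
    hδ.mul_left_cancel <| hδ.mul_right_cancel <| by
      ext i j
      exact hXY (i, j)
  refine Set.Finite.of_finite_image ?_ (hinj.mono fun _ hG => hG.1)
  refine (IsNorm.finite_setOf_forall_int_and_le ⟨hN0, hNadd, hNsmul⟩ f hf C).subset ?_
  rintro _ ⟨G, ⟨hGU, hGC⟩, rfl⟩
  obtain ⟨K, hK⟩ := exists_map_eq_deltaR_mul_mul_deltaR hr' (hU hGU)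
  refine ⟨fun p => ⟨K p.1 p.2, ?_⟩, hGC⟩
  exact congrFun (congrFun hK p.1) p.2

theorem finitely_many_coset_reps_with_bounded_norm (n : ℕ)
    (r : Fin n → ℕ) (hr : ∀ i, 0 < r i) (hdvd : ∀ i j : Fin n, i ≤ j → r i ∣ r j)
    (U : Set (Matrix (Fin n ⊕ Fin n) (Fin n ⊕ Fin n) ℝ)) (hU : U ⊆ GrSet n r)
    (hpair : ∀ G ∈ U, ∀ H ∈ U, G ≠ H → H⁻¹ * G ∉ SpTilde n)
    (N : Matrix (Fin n ⊕ Fin n) (Fin n ⊕ Fin n) ℝ → ℝ)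
    (hN0 : ∀ A, N A = 0 ↔ A = 0)
    (hNadd : ∀ A B, N (A + B) ≤ N A + N B)
    (hNsmul : ∀ (c : ℝ) A, N (c • A) = |c| * N A)
    (C : ℝ) (hC : 0 < C) :
    {G ∈ U | N ((G⁻¹)ᵀ * sympJ n * G⁻¹) ≤ C}.Finite :=
  finitely_many_coset_reps_with_bounded_norm_general n r hr U hU hpair N hN0 hNadd hNsmul C
end

section
/- For the sequence Y_k ∈ P_4 given by Y_k = Bᵀ_k B_k with B_k = [[1,k,0,0],[0,1,0,0],[0,0,1,0],[0,0,0,1]], the eigenvalues of (Y_k^{-1}J)² are the roots (each with multiplicity 2) of X² + (k²+2)X + 1 = 0; in particular d_2(Y_k) = 2^{-1/2}√(k²+2+k√(k²+4)), which tends to infinity as k → ∞. -/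
/-!
`Y_k⁻¹ J` is an explicit matrix with characteristic polynomial
`X⁴ + (k² + 2) X² + 1 = (X² + a²)(X² + b²)`, where `a, b = (√(k² + 4) ± k) / 2` satisfy
`a b = 1` and `a² + b² = k² + 2`. Hence its eigenvalues are `± i a`, `± i b`, so
`d₂(Y_k) = a ≥ k`, and `a = √(a²)` is the closed form of the statement.
-/

open Matrix Polynomial

/-- The standard symplectic matrix `J` on `ℝ⁴`. -/
def J4 : Matrix (Fin 4) (Fin 4) ℝ :=
  !![0,0,1,0; 0,0,0,1; -1,0,0,0; 0,-1,0,0]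

/-- The family of positive definite matrices `Y_k`. -/
def Yk (k : ℕ) : Matrix (Fin 4) (Fin 4) ℝ :=
  !![1,(k:ℝ),0,0; (k:ℝ),(k:ℝ)^2+1,0,0; 0,0,1,0; 0,0,0,1]

/-- `d_2(Y)`: the largest absolute value of an eigenvalue of `Y⁻¹ * J`. -/
noncomputable def d2 (Y : Matrix (Fin 4) (Fin 4) ℝ) : ℝ :=
  sSup ((fun z : ℂ => ‖z‖) '' spectrum ℂ ((Y⁻¹ * J4).map Complex.ofReal))

theorem Matrix.det_fin_four {R : Type*} [CommRing R] (A : Matrix (Fin 4) (Fin 4) R) :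
    A.det = A 0 0 * !![A 1 1, A 1 2, A 1 3; A 2 1, A 2 2, A 2 3; A 3 1, A 3 2, A 3 3].det
      - A 0 1 * !![A 1 0, A 1 2, A 1 3; A 2 0, A 2 2, A 2 3; A 3 0, A 3 2, A 3 3].det
      + A 0 2 * !![A 1 0, A 1 1, A 1 3; A 2 0, A 2 1, A 2 3; A 3 0, A 3 1, A 3 3].det
      - A 0 3 * !![A 1 0, A 1 1, A 1 2; A 2 0, A 2 1, A 2 2; A 3 0, A 3 1, A 3 2].det := by
  rw [det_succ_row_zero, Fin.sum_univ_four]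
  simp only [det_fin_three, submatrix_apply, of_apply, cons_val', cons_val, cons_val_fin_one,
    Fin.succAbove, Fin.reduceCastSucc, Fin.reduceSucc, Fin.reduceLT, ↓reduceIte,
    Fin.coe_ofNat_eq_mod]
  ring

theorem Polynomial.isRoot_biquadratic_iff (a b z : ℂ) :
    (X ^ 4 + C (a ^ 2 + b ^ 2) * X ^ 2 + C (a ^ 2 * b ^ 2)).IsRoot z ↔
      z = Complex.I * a ∨ z = -(Complex.I * a) ∨
        z = Complex.I * b ∨ z = -(Complex.I * b) := by
  have hfactor : (X ^ 4 + C (a ^ 2 + b ^ 2) * X ^ 2 + C (a ^ 2 * b ^ 2)).eval z =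
      (z - Complex.I * a) * (z + Complex.I * a) * ((z - Complex.I * b) * (z + Complex.I * b)) := by
    simp only [eval_add, eval_mul, eval_pow, eval_C, eval_X]
    linear_combination
      ((a ^ 2 + b ^ 2) * z ^ 2 + (1 - Complex.I ^ 2) * a ^ 2 * b ^ 2) * Complex.I_sq
  simp only [IsRoot.def, hfactor, mul_eq_zero, sub_eq_zero, add_eq_zero_iff_eq_neg, or_assoc]

/-- `dPlus t` and `dMinus t` are the positive roots of `x² - t x - 1` and `x² + t x - 1`;
for `t = k` they are `d₂(Y_k)` and `d₁(Y_k)`. -/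
noncomputable def dPlus (t : ℝ) : ℝ := (√(t ^ 2 + 4) + t) / 2

noncomputable def dMinus (t : ℝ) : ℝ := (√(t ^ 2 + 4) - t) / 2

lemma sq_sqrt_sq_add_four (t : ℝ) : √(t ^ 2 + 4) ^ 2 = t ^ 2 + 4 :=
  Real.sq_sqrt (by positivity)

lemma abs_lt_sqrt_sq_add_four (t : ℝ) : |t| < √(t ^ 2 + 4) := by
  rw [← Real.sqrt_sq_eq_abs]
  exact Real.sqrt_lt_sqrt (sq_nonneg t) (by linarith)

lemma le_dPlus (t : ℝ) : t ≤ dPlus t := by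
  have := abs_lt_sqrt_sq_add_four t
  unfold dPlus
  linarith [le_abs_self t]

lemma dPlus_nonneg (t : ℝ) : 0 ≤ dPlus t := by
  have := abs_lt_sqrt_sq_add_four t
  unfold dPlus
  linarith [neg_abs_le t]

lemma dMinus_nonneg (t : ℝ) : 0 ≤ dMinus t := by
  have := abs_lt_sqrt_sq_add_four t
  unfold dMinus
  linarith [le_abs_self t]

lemma dMinus_le_dPlus {t : ℝ} (ht : 0 ≤ t) : dMinus t ≤ dPlus t := by
  unfold dMinus dPlus
  linarith

lemma dPlus_sq_add_dMinus_sq (t : ℝ) : dPlus t ^ 2 + dMinus t ^ 2 = t ^ 2 + 2 := by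
  unfold dPlus dMinus
  linear_combination (1 / 2 : ℝ) * sq_sqrt_sq_add_four t

lemma dPlus_mul_dMinus (t : ℝ) : dPlus t * dMinus t = 1 := by
  unfold dPlus dMinus
  linear_combination (1 / 4 : ℝ) * sq_sqrt_sq_add_four t

lemma dPlus_eq_sqrt_div_sqrt_two (t : ℝ) :
    dPlus t = √(t ^ 2 + 2 + t * √(t ^ 2 + 4)) / √2 := by
  have hsq : dPlus t ^ 2 = (t ^ 2 + 2 + t * √(t ^ 2 + 4)) / 2 := by
    unfold dPlus
    linear_combination (1 / 4 : ℝ) * sq_sqrt_sq_add_four t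
  rw [← Real.sqrt_div' _ zero_le_two, ← hsq, Real.sqrt_sq (dPlus_nonneg t)]

lemma inv_Yk (k : ℕ) :
    (Yk k)⁻¹ =
      !![(k : ℝ) ^ 2 + 1, -(k : ℝ), 0, 0; -(k : ℝ), 1, 0, 0; 0, 0, 1, 0; 0, 0, 0, 1] := by
  refine inv_eq_right_inv ?_
  ext i j
  fin_cases i <;> fin_cases j <;> simp [Yk, mul_apply, Fin.sum_univ_four, sq, mul_comm]

lemma inv_Yk_mul_J4 (k : ℕ) :
    (Yk k)⁻¹ * J4 =
      !![0, 0, (k : ℝ) ^ 2 + 1, -(k : ℝ); 0, 0, -(k : ℝ), 1; -1, 0, 0, 0; 0, -1, 0, 0] := by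
  rw [inv_Yk]
  ext i j
  fin_cases i <;> fin_cases j <;> simp [J4, mul_apply, Fin.sum_univ_four]

lemma inv_Yk_mul_J4_sq (k : ℕ) : ((Yk k)⁻¹ * J4) ^ 2 =
    !![-((k : ℝ) ^ 2 + 1), (k : ℝ), 0, 0; (k : ℝ), -1, 0, 0;
      0, 0, -((k : ℝ) ^ 2 + 1), k; 0, 0, k, -1] := by
  rw [inv_Yk_mul_J4]
  ext i j
  fin_cases i <;> fin_cases j <;> simp [sq, mul_apply, Fin.sum_univ_four]

lemma charpoly_inv_Yk_mul_J4 (k : ℕ) :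
    ((Yk k)⁻¹ * J4).charpoly = X ^ 4 + C ((k : ℝ) ^ 2 + 2) * X ^ 2 + 1 := by
  rw [inv_Yk_mul_J4, charpoly, det_fin_four]
  simp only [charmatrix_apply_eq, charmatrix_apply_ne, ne_eq, Fin.reduceEq, not_false_eq_true,
    of_apply, cons_val', cons_val, cons_val_fin_one, det_fin_three, map_zero, map_neg, map_add,
    map_pow, map_natCast, map_one, map_ofNat]
  ring

lemma charpoly_inv_Yk_mul_J4_sq (k : ℕ) :
    (((Yk k)⁻¹ * J4) ^ 2).charpoly = (X ^ 2 + C ((k : ℝ) ^ 2 + 2) * X + 1) ^ 2 := by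
  rw [inv_Yk_mul_J4_sq, charpoly, det_fin_four]
  simp only [charmatrix_apply_eq, charmatrix_apply_ne, ne_eq, Fin.reduceEq, not_false_eq_true,
    of_apply, cons_val', cons_val, cons_val_fin_one, det_fin_three, map_zero, map_neg, map_add,
    map_pow, map_natCast, map_one, map_ofNat]
  ring

lemma spectrum_inv_Yk_mul_J4 (k : ℕ) :
    spectrum ℂ (((Yk k)⁻¹ * J4).map Complex.ofReal) =
      {Complex.I * dPlus k, -(Complex.I * dPlus k), Complex.I * dMinus k,
        -(Complex.I * dMinus k)} := by
  have hcharpoly : (((Yk k)⁻¹ * J4).map Complex.ofReal).charpoly =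
      X ^ 4 + C ((dPlus k : ℂ) ^ 2 + (dMinus k : ℂ) ^ 2) * X ^ 2 +
        C ((dPlus k : ℂ) ^ 2 * (dMinus k : ℂ) ^ 2) := by
    change (((Yk k)⁻¹ * J4).map Complex.ofRealHom).charpoly = _
    rw [charpoly_map, charpoly_inv_Yk_mul_J4, ← mul_pow]
    simp only [← Complex.ofReal_pow, ← Complex.ofReal_add, ← Complex.ofReal_mul,
      dPlus_sq_add_dMinus_sq, dPlus_mul_dMinus]
    simp
  ext z
  rw [mem_spectrum_iff_isRoot_charpoly, hcharpoly, isRoot_biquadratic_iff]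
  simp only [Set.mem_insert_iff, Set.mem_singleton_iff]

lemma d2_Yk (k : ℕ) : d2 (Yk k) = dPlus k := by
  have hnorm : ∀ t : ℝ, 0 ≤ t → ‖Complex.I * t‖ = t := fun t ht => by
    rw [norm_mul, Complex.norm_I, one_mul, Complex.norm_of_nonneg ht]
  rw [d2, spectrum_inv_Yk_mul_J4]
  simp only [Set.image_insert_eq, Set.image_singleton, norm_neg,
    hnorm _ (dPlus_nonneg _), hnorm _ (dMinus_nonneg _), Set.insert_idem]
  rw [Set.pair_eq_singleton, csSup_pair, sup_eq_left.mpr (dMinus_le_dPlus k.cast_nonneg)]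

theorem Yk_eigenvalues_and_d2 :
    (∀ k : ℕ, (((Yk k)⁻¹ * J4) ^ 2).charpoly =
      (X ^ 2 + C ((k : ℝ) ^ 2 + 2) * X + 1) ^ 2) ∧
    (∀ k : ℕ, d2 (Yk k) =
      Real.sqrt ((k : ℝ) ^ 2 + 2 + (k : ℝ) * Real.sqrt ((k : ℝ) ^ 2 + 4)) / Real.sqrt 2) ∧
    Filter.Tendsto (fun k : ℕ => d2 (Yk k)) Filter.atTop Filter.atTop := by
  refine ⟨charpoly_inv_Yk_mul_J4_sq, fun k => by rw [d2_Yk, dPlus_eq_sqrt_div_sqrt_two], ?_⟩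
  simp only [d2_Yk]
  exact Filter.tendsto_atTop_mono (fun k => le_dPlus k) tendsto_natCast_atTop_atTop
end

section
/- Let M be a set of symmetric positive definite n×n matrices contained in Minkowski's fundamental domain, and suppose there exist constants C_0, C_1 > 0 such that m(Y) ≥ C_0 and det(Y) ≤ C_1 for all Y ∈ M. Then M has compact closure in P_n (Hermite–Mahler compactness). -/
/-!
On a reduced form `Y` with `m(Y) ≥ C₀` and `det Y ≤ C₁` all entries are bounded: every diagonal
entry is at least `m(Y) ≥ C₀`, Minkowski's inequality `∏ yᵢᵢ ≤ c det Y` then bounds each `yᵢᵢ`, and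
reduction gives `|yᵢⱼ| ≤ y_{max(i,j)}`. Hermite's inequality `κ m(Y)ⁿ ≤ det Y`, obtained from
Minkowski's convex body theorem applied to the ellipsoid `Y[x] < m(Y)`, keeps the determinant
away from `0`, so limit points are positive semidefinite with positive determinant, hence in `P_n`.

Minkowski's inequality is proved by induction on `n`. Pick an index `k` such that `yₖₖ` is much
larger than every earlier diagonal entry while no later one is much larger than `yₖₖ`. The upper
left `k × k` block is again reduced, and rounding the real minimiser shows that the Schur
complement of this block takes values at least `¾ yₖₖ` at nonzero integral vectors, so Hermite's
inequality bounds the product of the remaining diagonal entries by its determinant.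
-/

open Matrix Finset MeasureTheory Pointwise

namespace HermiteMahler

variable {ι : Type*} [Fintype ι]

lemma convex_setOf_sum_sq_lt (C : ℝ) : Convex ℝ {y : ι → ℝ | ∑ i, y i ^ 2 < C} := by
  have : ConvexOn ℝ Set.univ (∑ i, fun y : ι → ℝ => y i ^ 2) :=
    Finset.sum_induction _ (ConvexOn ℝ Set.univ) (fun _ _ => ConvexOn.add)
      (convexOn_const 0 convex_univ) fun i _ =>
        (even_two.convexOn_pow (𝕜 := ℝ)).comp_linearMap
          (LinearMap.proj (R := ℝ) (φ := fun _ : ι => ℝ) i)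
  simpa using this.convex_lt C

lemma volume_setOf_sum_sq_lt {C : ℝ} (hC : 0 < C) :
    volume {y : ι → ℝ | ∑ i, y i ^ 2 < C} =
      ENNReal.ofReal (√C ^ Fintype.card ι) * volume {y : ι → ℝ | ∑ i, y i ^ 2 < 1} := by
  have hball : {y : ι → ℝ | ∑ i, y i ^ 2 < C} = √C • {y : ι → ℝ | ∑ i, y i ^ 2 < 1} := by
    ext y
    rw [Set.mem_smul_set_iff_inv_smul_mem₀ (by positivity)]
    simp only [Set.mem_ofPred_eq, Pi.smul_apply, smul_eq_mul, mul_pow, ← Finset.mul_sum,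
      inv_pow, Real.sq_sqrt hC.le]
    rw [inv_mul_lt_iff₀ hC, mul_one]
  rw [hball, Measure.addHaar_smul_of_nonneg _ (Real.sqrt_nonneg C),
    Module.finrank_fintype_fun_eq_card]

lemma volume_setOf_sum_sq_lt_one_pos : 0 < volume {y : ι → ℝ | ∑ i, y i ^ 2 < 1} :=
  (isOpen_lt (by fun_prop) continuous_const).measure_pos volume ⟨0, by simp⟩

lemma volume_setOf_sum_sq_lt_one_lt_top : volume {y : ι → ℝ | ∑ i, y i ^ 2 < 1} < ⊤ := by
  refine lt_of_le_of_lt (measure_mono fun y hy => ?_) (measure_closedBall_lt_top (x := 0) (r := 1))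
  rw [mem_closedBall_zero_iff, pi_norm_le_iff_of_nonneg zero_le_one]
  intro i
  have : y i ^ 2 ≤ 1 := (Finset.single_le_sum (fun j _ => sq_nonneg (y j)) (mem_univ i)).trans hy.le
  simpa [Real.norm_eq_abs, sq_le_one_iff_abs_le_one] using this

lemma exists_intCast_ne_zero_mem {s : Set (ι → ℝ)} (h_symm : ∀ x ∈ s, -x ∈ s)
    (h_conv : Convex ℝ s) (h : 2 ^ Fintype.card ι < volume s) :
    ∃ a : ι → ℤ, a ≠ 0 ∧ (fun i => (a i : ℝ)) ∈ s := by
  classical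
  set b := Pi.basisFun ℝ ι
  have : Countable (Submodule.span ℤ (Set.range b)).toAddSubgroup :=
    inferInstanceAs (Countable (Submodule.span ℤ (Set.range b)))
  have fund := ZSpan.isAddFundamentalDomain' b volume
  have hF : volume (ZSpan.fundamentalDomain b) = 1 := by
    rw [ZSpan.fundamentalDomain_pi_basisFun]; simp [volume_pi_pi]
  obtain ⟨⟨x, hxL⟩, hx0, hxs⟩ := exists_ne_zero_mem_lattice_of_measure_mul_two_pow_lt_measure
    (L := (Submodule.span ℤ (Set.range b)).toAddSubgroup) fund h_symm h_conv
    (by rwa [hF, one_mul, Module.finrank_fintype_fun_eq_card])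
  have hint : ∀ i, ∃ z : ℤ, (z : ℝ) = x i := fun i => by
    obtain ⟨z, hz⟩ := (b.mem_span_iff_repr_mem ℤ x).mp hxL i
    exact ⟨z, by simpa [b] using hz⟩
  choose a ha using hint
  have hax : (fun i => (a i : ℝ)) = x := funext ha
  refine ⟨a, fun h0 => hx0 ?_, hax ▸ hxs⟩
  ext i
  simp [← ha, h0]

open scoped MatrixOrder in
lemma _root_.Matrix.PosDef.exists_eq_transpose_mul_self {Y : Matrix ι ι ℝ} (hY : Y.PosDef) :
    ∃ B : Matrix ι ι ℝ, Y = Bᵀ * B := by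
  classical
  obtain ⟨B, rfl⟩ := CStarAlgebra.nonneg_iff_eq_star_mul_self.mp hY.posSemidef.nonneg
  exact ⟨B, by simp [star_eq_conjTranspose]⟩

lemma dotProduct_transpose_mul_self_mulVec (B : Matrix ι ι ℝ) (x : ι → ℝ) :
    x ⬝ᵥ (Bᵀ * B) *ᵥ x = ∑ i, (B *ᵥ x) i ^ 2 := by
  rw [← mulVec_mulVec, dotProduct_mulVec, vecMul_transpose, dotProduct_comm]
  simp [dotProduct, sq]

theorem exists_hermite_constant [DecidableEq ι] :
    ∃ κ > 0, ∀ Y : Matrix ι ι ℝ, Y.PosDef → ∀ C > 0,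
      (∀ a : ι → ℤ, a ≠ 0 → C ≤ (fun i => (a i : ℝ)) ⬝ᵥ Y *ᵥ fun i => (a i : ℝ)) →
        κ * C ^ Fintype.card ι ≤ Y.det := by
  set v := (volume {y : ι → ℝ | ∑ i, y i ^ 2 < 1}).toReal
  have hv : 0 < v := ENNReal.toReal_pos volume_setOf_sum_sq_lt_one_pos.ne'
    volume_setOf_sum_sq_lt_one_lt_top.ne
  refine ⟨v ^ 2 / 4 ^ Fintype.card ι, by positivity, fun Y hY C hC hmin => ?_⟩
  obtain ⟨B, rfl⟩ := hY.exists_eq_transpose_mul_self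
  have hdet : (Bᵀ * B).det = B.det ^ 2 := by rw [det_mul, det_transpose, sq]
  have hB : B.det ≠ 0 := fun h => by simpa [hdet, h] using hY.det_pos
  set E := {x : ι → ℝ | x ⬝ᵥ (Bᵀ * B) *ᵥ x < C}
  have hE : E = toLin' B ⁻¹' {y | ∑ i, y i ^ 2 < C} := by
    ext x; simp [E, dotProduct_transpose_mul_self_mulVec]
  have hvolE : volume E = ENNReal.ofReal (|B.det|⁻¹ * √C ^ Fintype.card ι) *
      volume {y : ι → ℝ | ∑ i, y i ^ 2 < 1} := by
    rw [hE, Measure.addHaar_preimage_linearMap _ (by simpa using hB), volume_setOf_sum_sq_lt hC,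
      ← mul_assoc, ← ENNReal.ofReal_mul (by positivity), LinearMap.det_toLin', abs_inv]
  have hE_le : volume E ≤ 2 ^ Fintype.card ι := by
    by_contra! hlt
    obtain ⟨a, ha, haE⟩ := exists_intCast_ne_zero_mem (s := E)
      (fun x hx => by simpa [E, mulVec_neg] using hx)
      (hE ▸ (convex_setOf_sum_sq_lt C).linear_preimage _) hlt
    exact (hmin a ha).not_gt haE
  have key : |B.det|⁻¹ * √C ^ Fintype.card ι * v ≤ 2 ^ Fintype.card ι := by
    have := ENNReal.toReal_mono (by simp) (hvolE ▸ hE_le)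
    rwa [ENNReal.toReal_mul, ENNReal.toReal_ofReal (by positivity), ENNReal.toReal_pow,
      ENNReal.toReal_ofNat] at this
  rw [mul_assoc, inv_mul_le_iff₀ (abs_pos.mpr hB)] at key
  rw [hdet, div_mul_eq_mul_div, div_le_iff₀ (by positivity)]
  calc v ^ 2 * C ^ Fintype.card ι = (√C ^ Fintype.card ι * v) ^ 2 := by
        rw [mul_pow, ← pow_mul, mul_comm _ 2, pow_mul, Real.sq_sqrt hC.le, mul_comm]
    _ ≤ (|B.det| * 2 ^ Fintype.card ι) ^ 2 := pow_le_pow_left₀ (by positivity) key 2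
    _ = B.det ^ 2 * 4 ^ Fintype.card ι := by
        rw [mul_pow, sq_abs, ← pow_mul, mul_comm _ 2, pow_mul]; norm_num

omit [Fintype ι] in
lemma intCast_single [DecidableEq ι] (j : ι) (z : ℤ) :
    (fun l => ((Pi.single j z : ι → ℤ) l : ℝ)) = Pi.single j (z : ℝ) :=
  funext <| Pi.apply_single (fun _ (z : ℤ) => (z : ℝ)) (fun _ => Int.cast_zero) j z

lemma le_diag_of_forall_le_dotProduct [DecidableEq ι] {Y : Matrix ι ι ℝ} {C : ℝ}
    (h : ∀ a : ι → ℤ, a ≠ 0 → C ≤ (fun i => (a i : ℝ)) ⬝ᵥ Y *ᵥ fun i => (a i : ℝ)) (i : ι) :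
    C ≤ Y i i := by
  have := h (Pi.single i 1) (by simp)
  rwa [intCast_single, Int.cast_one, mulVec_single_one, single_one_dotProduct] at this

lemma dotProduct_single_add_single_mulVec [DecidableEq ι] (Y : Matrix ι ι ℝ) (i j : ι)
    (c d : ℝ) :
    (Pi.single i c + Pi.single j d) ⬝ᵥ Y *ᵥ (Pi.single i c + Pi.single j d) =
      c ^ 2 * Y i i + c * d * (Y i j + Y j i) + d ^ 2 * Y j j := by
  simp [mulVec_add, add_dotProduct, dotProduct_add]
  ring

lemma exists_eq_smul_gcd_eq_one {a : ι → ℤ} (ha : a ≠ 0) :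
    ∃ g : ℕ, 0 < g ∧ ∃ b : ι → ℤ, univ.gcd (fun i => (b i).natAbs) = 1 ∧ a = (g : ℤ) • b := by
  set g := univ.gcd fun i => (a i).natAbs
  have hg : g ≠ 0 := fun h => ha <| funext fun i => by
    simpa using Finset.gcd_eq_zero_iff.mp h i (mem_univ i)
  have hdvd : ∀ i, (g : ℤ) ∣ a i := fun i =>
    Int.natCast_dvd.mpr (Finset.gcd_dvd (mem_univ i))
  have hab : a = (g : ℤ) • fun i => a i / g := funext fun i => (Int.mul_ediv_cancel' (hdvd i)).symm
  refine ⟨g, Nat.pos_of_ne_zero hg, _, ?_, hab⟩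
  have habs : ∀ i, (a i).natAbs = g * (a i / g).natAbs := fun i => by
    conv_lhs => rw [congrFun hab i]
    simp [Int.natAbs_mul]
  have : g * univ.gcd (fun i => (a i / g).natAbs) = g := by
    rw [← normalize_eq g, ← Finset.gcd_mul_left]
    simp only [← habs, g, normalize_eq]
  exact (Nat.mul_eq_left hg).mp this

lemma le_dotProduct_intCast_of_gcd_eq_one {Y : Matrix ι ι ℝ} (hY : Y.PosSemidef) {C : ℝ}
    (h : ∀ b : ι → ℤ, univ.gcd (fun i => (b i).natAbs) = 1 →
      C ≤ (fun i => (b i : ℝ)) ⬝ᵥ Y *ᵥ fun i => (b i : ℝ))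
    {a : ι → ℤ} (ha : a ≠ 0) : C ≤ (fun i => (a i : ℝ)) ⬝ᵥ Y *ᵥ fun i => (a i : ℝ) := by
  obtain ⟨g, hg, b, hb, rfl⟩ := exists_eq_smul_gcd_eq_one ha
  have hcast : (fun i => (((g : ℤ) • b) i : ℝ)) = (g : ℝ) • fun i => (b i : ℝ) := by
    ext i; simp
  have hg1 : (1 : ℝ) ≤ (g : ℝ) ^ 2 := one_le_pow₀ (by exact_mod_cast hg)
  have hnonneg := hY.dotProduct_mulVec_nonneg fun i => (b i : ℝ)
  rw [hcast, mulVec_smul, dotProduct_smul, smul_dotProduct, smul_smul, smul_eq_mul, ← sq]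
  simp only [star_trivial] at hnonneg
  nlinarith [h b hb]

lemma dotProduct_mulVec_le_of_abs_le (A : Matrix ι ι ℝ) {x : ι → ℝ} {r : ℝ}
    (hx : ∀ i, |x i| ≤ r) : x ⬝ᵥ A *ᵥ x ≤ r ^ 2 * ∑ i, ∑ j, |A i j| := by
  simp only [dotProduct, mulVec, Finset.mul_sum]
  refine sum_le_sum fun i _ => sum_le_sum fun j _ => ?_
  have hr : 0 ≤ r := (abs_nonneg _).trans (hx i)
  calc x i * (A i j * x j) ≤ |x i| * (|A i j| * |x j|) := by
        rw [← abs_mul, ← abs_mul]; exact le_abs_self _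
    _ ≤ r * (|A i j| * r) := by gcongr <;> exact hx _
    _ = r ^ 2 * |A i j| := by ring

section Reduced

variable [LinearOrder ι]

/-- The inequalities `Y[a] ≥ yₖₖ` of Minkowski's fundamental domain. -/
def IsReduced (Y : Matrix ι ι ℝ) : Prop :=
  ∀ (k : ι) (a : ι → ℤ), (univ.filter (fun j : ι => k ≤ j)).gcd (fun j => (a j).natAbs) = 1 →
    Y k k ≤ (fun i => (a i : ℝ)) ⬝ᵥ Y *ᵥ fun i => (a i : ℝ)

omit [Fintype ι] [LinearOrder ι] in
lemma gcd_natAbs_eq_one_of_mem {s : Finset ι} {a : ι → ℤ} {j : ι} (hj : j ∈ s)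
    (h : (a j).natAbs = 1) : s.gcd (fun l => (a l).natAbs) = 1 :=
  Nat.dvd_one.mp (h ▸ Finset.gcd_dvd hj)

variable {Y : Matrix ι ι ℝ}

lemma IsReduced.diag_le_diag (hR : IsReduced Y) {i j : ι} (hij : i ≤ j) : Y i i ≤ Y j j := by
  have := hR i (Pi.single j 1)
    (gcd_natAbs_eq_one_of_mem (mem_filter.mpr ⟨mem_univ j, hij⟩) (by simp))
  rwa [intCast_single, Int.cast_one, mulVec_single_one, single_one_dotProduct] at this

lemma IsReduced.two_mul_abs_le (hY : Y.IsHermitian) (hR : IsReduced Y) {i j : ι} (hij : i < j) :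
    2 * |Y i j| ≤ Y i i := by
  have key : ∀ e : ℤ, e.natAbs = 1 → Y j j ≤ Y i i + 2 * e * Y i j + e ^ 2 * Y j j := by
    intro e he
    have hcast : (fun l => ((Pi.single i 1 + Pi.single j e : ι → ℤ) l : ℝ)) =
        Pi.single i 1 + Pi.single j (e : ℝ) := by
      ext l
      simp only [Pi.add_apply, Int.cast_add, congrFun (intCast_single i 1) l,
        congrFun (intCast_single j e) l, Int.cast_one]
    have := hR j (Pi.single i 1 + Pi.single j e)
      (gcd_natAbs_eq_one_of_mem (mem_filter.mpr ⟨mem_univ j, le_rfl⟩) (by simp [hij.ne', he]))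
    have hji : Y j i = Y i j := by simpa using hY.apply i j
    rw [hcast, dotProduct_single_add_single_mulVec, hji] at this
    linarith
  have h1 := key 1 rfl
  have h2 := key (-1) rfl
  push_cast at h1 h2
  rcases abs_cases (Y i j) with ⟨h, _⟩ | ⟨h, _⟩ <;> rw [h] <;> linarith

lemma IsReduced.abs_le_diag (hY : Y.PosDef) (hR : IsReduced Y) {i j k : ι} (hik : i ≤ k)
    (hjk : j ≤ k) : |Y i j| ≤ Y k k := by
  rcases lt_trichotomy i j with hij | rfl | hji
  · have := hR.two_mul_abs_le hY.isHermitian hij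
    linarith [hY.diag_pos (i := i), hR.diag_le_diag hik]
  · rw [abs_of_pos hY.diag_pos]
    exact hR.diag_le_diag hik
  · have := hR.two_mul_abs_le hY.isHermitian hji
    have hsymm : Y i j = Y j i := by simpa using hY.isHermitian.apply j i
    rw [hsymm]
    linarith [hY.diag_pos (i := j), hR.diag_le_diag hjk]

end Reduced

section Schur

variable {α β : Type*} {Y : Matrix (α ⊕ β) (α ⊕ β) ℝ}

lemma _root_.Matrix.PosDef.toBlocks₁₁ (hY : Y.PosDef) : Y.toBlocks₁₁.PosDef :=
  hY.submatrix Sum.inl_injective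

lemma _root_.Matrix.IsHermitian.eq_fromBlocks_toBlocks₁₂ (hY : Y.IsHermitian) :
    Y = fromBlocks Y.toBlocks₁₁ Y.toBlocks₁₂ Y.toBlocks₁₂ᴴ Y.toBlocks₂₂ := by
  conv_lhs => rw [← fromBlocks_toBlocks Y]
  congr 1
  ext i j
  exact (hY.apply (Sum.inr i) (Sum.inl j)).symm

variable [Fintype α] [DecidableEq α]

noncomputable def schurCompl (Y : Matrix (α ⊕ β) (α ⊕ β) ℝ) : Matrix β β ℝ :=
  Y.toBlocks₂₂ - Y.toBlocks₁₂ᴴ * Y.toBlocks₁₁⁻¹ * Y.toBlocks₁₂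

lemma dotProduct_sumElim_mulVec [Fintype β] (hY : Y.PosDef) (x : α → ℝ) (u : β → ℝ) :
    Sum.elim x u ⬝ᵥ Y *ᵥ Sum.elim x u =
      (x + (Y.toBlocks₁₁⁻¹ * Y.toBlocks₁₂) *ᵥ u) ⬝ᵥ Y.toBlocks₁₁ *ᵥ
        (x + (Y.toBlocks₁₁⁻¹ * Y.toBlocks₁₂) *ᵥ u) + u ⬝ᵥ schurCompl Y *ᵥ u := by
  have := hY.toBlocks₁₁.isUnit.invertible
  have h := schur_complement_eq₁₁ Y.toBlocks₁₂ Y.toBlocks₂₂ x u hY.toBlocks₁₁.isHermitian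
  rw [← hY.isHermitian.eq_fromBlocks_toBlocks₁₂] at h
  simpa [dotProduct_mulVec, schurCompl] using h

variable [Fintype β] [DecidableEq β]

lemma det_eq_det_toBlocks₁₁_mul_det_schurCompl (hY : Y.PosDef) :
    Y.det = Y.toBlocks₁₁.det * (schurCompl Y).det := by
  have := hY.toBlocks₁₁.isUnit.invertible
  conv_lhs => rw [hY.isHermitian.eq_fromBlocks_toBlocks₁₂]
  rw [det_fromBlocks₁₁, invOf_eq_nonsing_inv, schurCompl]

lemma posDef_schurCompl (hY : Y.PosDef) : (schurCompl Y).PosDef := by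
  have := hY.toBlocks₁₁.isUnit.invertible
  have hpsd : (schurCompl Y).PosSemidef := by
    rw [schurCompl, ← PosDef.fromBlocks₁₁ _ _ hY.toBlocks₁₁,
      ← hY.isHermitian.eq_fromBlocks_toBlocks₁₂]
    exact hY.posSemidef
  refine hpsd.posDef_iff_det_ne_zero.mpr fun h => hY.det_pos.ne' ?_
  rw [det_eq_det_toBlocks₁₁_mul_det_schurCompl hY, h, mul_zero]

end Schur

section Split

variable {K L : ℕ}

lemma intCast_append (a : Fin K → ℤ) (u : Fin L → ℤ) :
    (fun j => ((Fin.append a u j : ℤ) : ℝ)) =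
      Fin.append (fun i => (a i : ℝ)) fun t => (u t : ℝ) := by
  ext j
  refine Fin.addCases (fun i => ?_) (fun t => ?_) j <;> simp

lemma gcd_filter_castAdd_le_append_zero (i : Fin K) (a : Fin K → ℤ) :
    (univ.filter fun j => Fin.castAdd L i ≤ j).gcd (fun j => (Fin.append a 0 j).natAbs) =
      (univ.filter fun j => i ≤ j).gcd fun j => (a j).natAbs := by
  refine Nat.dvd_left_iff_eq.mp fun d => ?_
  simp only [Finset.dvd_gcd_iff, mem_filter, mem_univ, true_and, Fin.forall_fin_add,
    Fin.append_left, Fin.append_right, Pi.zero_apply, Int.natAbs_zero, dvd_zero, implies_true,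
    and_true]
  rfl

lemma gcd_filter_le_append {k : Fin (K + L)} (hk : (k : ℕ) = K) (a : Fin K → ℤ)
    (u : Fin L → ℤ) :
    (univ.filter fun j => k ≤ j).gcd (fun j => (Fin.append a u j).natAbs) =
      univ.gcd fun t => (u t).natAbs := by
  refine Nat.dvd_left_iff_eq.mp fun d => ?_
  simp [Finset.dvd_gcd_iff, Fin.forall_fin_add, Fin.le_def, hk]

def finSumBlocks (Y : Matrix (Fin (K + L)) (Fin (K + L)) ℝ) :
    Matrix (Fin K ⊕ Fin L) (Fin K ⊕ Fin L) ℝ :=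
  Y.submatrix finSumFinEquiv finSumFinEquiv

variable {Y : Matrix (Fin (K + L)) (Fin (K + L)) ℝ}

lemma dotProduct_finSumBlocks_mulVec (x : Fin K → ℝ) (u : Fin L → ℝ) :
    Sum.elim x u ⬝ᵥ finSumBlocks Y *ᵥ Sum.elim x u =
      Fin.append x u ⬝ᵥ Y *ᵥ Fin.append x u := by
  simp [finSumBlocks, dotProduct, mulVec, Fin.sum_univ_add]

lemma det_finSumBlocks : (finSumBlocks Y).det = Y.det :=
  det_submatrix_equiv_self _ _

lemma prod_diag_eq_mul_finSumBlocks :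
    ∏ i, Y i i = (∏ i, (finSumBlocks Y).toBlocks₁₁ i i) * ∏ t, (finSumBlocks Y).toBlocks₂₂ t t := by
  simp [finSumBlocks, toBlocks₁₁, toBlocks₂₂, Fin.prod_univ_add]

lemma posDef_finSumBlocks (hY : Y.PosDef) : (finSumBlocks Y).PosDef :=
  hY.submatrix finSumFinEquiv.injective

lemma IsReduced.toBlocks₁₁_finSumBlocks (hY : Y.PosDef) (hR : IsReduced Y) :
    IsReduced (finSumBlocks Y).toBlocks₁₁ := by
  intro i a ha
  have := hR (Fin.castAdd L i) (Fin.append a 0) (by rwa [gcd_filter_castAdd_le_append_zero])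
  have h0 : (fun t => ((0 : Fin L → ℤ) t : ℝ)) = 0 := by ext; simp
  rw [intCast_append, h0, ← dotProduct_finSumBlocks_mulVec,
    dotProduct_sumElim_mulVec (posDef_finSumBlocks hY)] at this
  simp only [add_zero, mulVec_zero, zero_dotProduct] at this
  exact this

lemma IsReduced.le_dotProduct_schurCompl (hY : Y.PosDef) (hR : IsReduced Y) {k : Fin (K + L)}
    (hk : (k : ℕ) = K) (hA : ∑ i, ∑ j, |(finSumBlocks Y).toBlocks₁₁ i j| ≤ Y k k)
    {u : Fin L → ℤ} (hu : u ≠ 0) :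
    3 / 4 * Y k k ≤ (fun t => (u t : ℝ)) ⬝ᵥ schurCompl (finSumBlocks Y) *ᵥ fun t => (u t : ℝ) := by
  have hZ := posDef_finSumBlocks hY
  refine le_dotProduct_intCast_of_gcd_eq_one (posDef_schurCompl hZ).posSemidef (fun b hb => ?_) hu
  -- `x = -v` minimises `Y[(x, b)]` over real `x`; apply reduction at the nearest integral `x`
  set A := (finSumBlocks Y).toBlocks₁₁
  set v := (A⁻¹ * (finSumBlocks Y).toBlocks₁₂) *ᵥ fun t => (b t : ℝ)
  have hY_le := hR k (Fin.append (fun i => -round (v i)) b) (by rwa [gcd_filter_le_append hk])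
  rw [intCast_append, ← dotProduct_finSumBlocks_mulVec, dotProduct_sumElim_mulVec hZ] at hY_le
  have hround : ∀ i, |((fun i => ((-round (v i) : ℤ) : ℝ)) + v) i| ≤ 1 / 2 := fun i => by
    simpa [abs_sub_comm, neg_add_eq_sub] using abs_sub_round (v i)
  linarith [dotProduct_mulVec_le_of_abs_le A hround]

lemma IsReduced.sum_abs_toBlocks₁₁_le (hY : Y.PosDef) (hR : IsReduced Y) {k : Fin (K + L)}
    (hk : (k : ℕ) = K) (hgap : ∀ i < k, (K : ℝ) ^ 2 * Y i i ≤ Y k k) :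
    ∑ i, ∑ j, |(finSumBlocks Y).toBlocks₁₁ i j| ≤ Y k k := by
  rcases Nat.eq_zero_or_pos K with rfl | hK
  · simp [hY.diag_pos.le]
  have hentry : ∀ i j : Fin K, |(finSumBlocks Y).toBlocks₁₁ i j| ≤ Y k k / K ^ 2 := fun i j => by
    have hlt : max (Fin.castAdd L i) (Fin.castAdd L j) < k := by
      simp [Fin.lt_def, hk]
    rw [le_div_iff₀ (by positivity), mul_comm]
    exact (mul_le_mul_of_nonneg_left (hR.abs_le_diag hY (le_max_left _ _) (le_max_right _ _))
      (by positivity)).trans (hgap _ hlt)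
  calc ∑ i, ∑ j, |(finSumBlocks Y).toBlocks₁₁ i j| ≤ ∑ _i : Fin K, ∑ _j : Fin K, Y k k / K ^ 2 :=
        sum_le_sum fun i _ => sum_le_sum fun j _ => hentry i j
    _ = Y k k := by
        simp only [sum_const, card_univ, Fintype.card_fin, nsmul_eq_mul]
        field_simp

end Split

theorem exists_gap {n : ℕ} (hn : 0 < n) (d : Fin n → ℝ) (hd : ∀ i, 0 ≤ d i) {T : ℝ}
    (hT : 1 ≤ T) : ∃ k : Fin n, (∀ i < k, T * d i < d k) ∧ ∀ j, d j ≤ T ^ n * d k := by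
  classical
  set Q : Fin n → Prop := fun k => ∀ j, T ^ (k : ℕ) * d j ≤ T ^ n * d k
  obtain ⟨N, -, hN⟩ := univ.exists_max_image d (univ_nonempty_iff.mpr ⟨⟨0, hn⟩⟩)
  have hQN : Q N := fun j => (mul_le_mul_of_nonneg_left (hN j (mem_univ j)) (by positivity)).trans
    (mul_le_mul_of_nonneg_right (pow_le_pow_right₀ hT N.is_lt.le) (hd N))
  obtain ⟨k, hk, hmin⟩ := (univ.filter Q).exists_min_image id ⟨N, by simpa using hQN⟩
  have hQk : Q k := (mem_filter.mp hk).2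
  refine ⟨k, fun i hik => ?_, fun j => ?_⟩
  · have hQi : ¬ Q i := fun hQi => (hmin i (by simpa using hQi)).not_gt hik
    obtain ⟨j, hj⟩ : ∃ j, T ^ n * d i < T ^ (i : ℕ) * d j := by simpa [Q] using hQi
    have hpow : T ^ ((i : ℕ) + 1) ≤ T ^ (k : ℕ) := pow_le_pow_right₀ hT hik
    have : T ^ n * (T * d i) < T ^ n * d k := by
      calc T ^ n * (T * d i) = T * (T ^ n * d i) := by ring
        _ < T * (T ^ (i : ℕ) * d j) := mul_lt_mul_of_pos_left hj (by positivity)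
        _ = T ^ ((i : ℕ) + 1) * d j := by ring
        _ ≤ T ^ (k : ℕ) * d j := mul_le_mul_of_nonneg_right hpow (hd j)
        _ ≤ T ^ n * d k := hQk j
    exact lt_of_mul_lt_mul_left this (by positivity)
  · exact (le_mul_of_one_le_left (hd j) (one_le_pow₀ hT)).trans (hQk j)

lemma IsReduced.prod_diag_le_of_gap {n K L : ℕ} (hKL : K + L = n) {Y : Matrix (Fin n) (Fin n) ℝ}
    (hY : Y.PosDef) (hR : IsReduced Y) {k : Fin n} (hk : (k : ℕ) = K) {c κ R : ℝ}
    (hc : ∀ Z : Matrix (Fin K) (Fin K) ℝ, Z.PosDef → IsReduced Z → ∏ i, Z i i ≤ c * Z.det)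
    (hκ0 : 0 < κ)
    (hκ : ∀ S : Matrix (Fin L) (Fin L) ℝ, S.PosDef → ∀ C > 0,
      (∀ a : Fin L → ℤ, a ≠ 0 → C ≤ (fun i => (a i : ℝ)) ⬝ᵥ S *ᵥ fun i => (a i : ℝ)) →
        κ * C ^ L ≤ S.det)
    (hgap : ∀ i < k, (K : ℝ) ^ 2 * Y i i ≤ Y k k) (htail : ∀ j, Y j j ≤ R * Y k k) :
    ∏ i, Y i i ≤ c * (4 / 3 * R) ^ L / κ * Y.det := by
  subst hKL
  have hZ := posDef_finSumBlocks hY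
  set y := Y k k
  have hy : 0 < y := hY.diag_pos
  have hR0 : 0 < R := pos_of_mul_pos_left ((hY.diag_pos (i := k)).trans_le (htail k)) hy.le
  have hdetS : κ * (3 / 4 * y) ^ L ≤ (schurCompl (finSumBlocks Y)).det :=
    hκ _ (posDef_schurCompl hZ) _ (by positivity) fun u hu =>
      hR.le_dotProduct_schurCompl hY hk (hR.sum_abs_toBlocks₁₁_le hY hk hgap) hu
  have hprodA := hc _ hZ.toBlocks₁₁ (hR.toBlocks₁₁_finSumBlocks hY)
  have hprodA_pos : 0 < ∏ i, (finSumBlocks Y).toBlocks₁₁ i i :=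
    prod_pos fun i _ => hZ.toBlocks₁₁.diag_pos
  have hprodD : ∏ t, (finSumBlocks Y).toBlocks₂₂ t t ≤ (R * y) ^ L := by
    refine (prod_le_prod (fun t _ => (hZ.diag_pos (i := Sum.inr t)).le)
      fun t _ => htail (Fin.natAdd K t)).trans_eq ?_
    simp
  have hyL : (R * y) ^ L ≤ (4 / 3 * R) ^ L * (schurCompl (finSumBlocks Y)).det / κ := by
    rw [le_div_iff₀ hκ0]
    calc (R * y) ^ L * κ = (4 / 3 * R) ^ L * (κ * (3 / 4 * y) ^ L) := by
          rw [show R * y = 4 / 3 * R * (3 / 4 * y) by ring, mul_pow]; ring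
      _ ≤ (4 / 3 * R) ^ L * (schurCompl (finSumBlocks Y)).det := by gcongr
  rw [prod_diag_eq_mul_finSumBlocks, ← det_finSumBlocks,
    det_eq_det_toBlocks₁₁_mul_det_schurCompl hZ]
  calc _ ≤ c * (finSumBlocks Y).toBlocks₁₁.det * (R * y) ^ L :=
        mul_le_mul hprodA hprodD (prod_nonneg fun t _ => (hZ.diag_pos (i := Sum.inr t)).le)
          (hprodA_pos.le.trans hprodA)
    _ ≤ c * (finSumBlocks Y).toBlocks₁₁.det *
          ((4 / 3 * R) ^ L * (schurCompl (finSumBlocks Y)).det / κ) :=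
        mul_le_mul_of_nonneg_left hyL (hprodA_pos.le.trans hprodA)
    _ = _ := by ring

theorem exists_prod_diag_le_det (n : ℕ) :
    ∃ c : ℝ, ∀ Y : Matrix (Fin n) (Fin n) ℝ, Y.PosDef → IsReduced Y → ∏ i, Y i i ≤ c * Y.det := by
  induction n using Nat.strong_induction_on with
  | _ n IH =>
  rcases Nat.eq_zero_or_pos n with rfl | hn
  · exact ⟨1, fun Y _ _ => by simp⟩
  choose c hc using fun K : Fin n => IH K K.is_lt
  choose κ hκ0 hκ using fun m : ℕ => exists_hermite_constant (ι := Fin m)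
  set T : ℝ := n ^ 2 + 1
  set bound : Fin n → ℝ := fun K => c K * (4 / 3 * T ^ n) ^ (n - K) / κ (n - K)
  refine ⟨∑ K, |bound K|, fun Y hY hR => ?_⟩
  obtain ⟨k, hgap, htail⟩ := exists_gap hn (fun i => Y i i) (fun i => hY.diag_pos.le)
    (T := T) (by simp [T])
  have hkT : (k : ℝ) ^ 2 ≤ T := by
    have : (k : ℝ) ≤ n := by exact_mod_cast k.is_lt.le
    simp only [T]; nlinarith [k.val.cast_nonneg (α := ℝ)]
  have hprod := hR.prod_diag_le_of_gap (K := k) (L := n - k) (by omega) hY rfl (hc k) (hκ0 _)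
    (by simpa using hκ (n - k))
    (fun i hi => (mul_le_mul_of_nonneg_right hkT hY.diag_pos.le).trans (hgap i hi).le) htail
  calc ∏ i, Y i i ≤ bound k * Y.det := hprod
    _ ≤ (∑ K, |bound K|) * Y.det := by
        gcongr
        · exact hY.det_pos.le
        · exact (le_abs_self _).trans (single_le_sum (fun K _ => abs_nonneg (bound K)) (mem_univ k))

section Compactness

lemma mul_pow_card_sub_one_le_prod {d : ι → ℝ} {C : ℝ} (hC : 0 ≤ C) (hd : ∀ j, C ≤ d j) (i : ι) :
    d i * C ^ (Fintype.card ι - 1) ≤ ∏ j, d j := by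
  classical
  calc d i * C ^ (Fintype.card ι - 1) = d i * ∏ _j ∈ univ.erase i, C := by
        rw [prod_const, card_erase_of_mem (mem_univ i), card_univ]
    _ ≤ d i * ∏ j ∈ univ.erase i, d j :=
        mul_le_mul_of_nonneg_left (prod_le_prod (fun _ _ => hC) fun j _ => hd j) (hC.trans (hd i))
    _ = ∏ j, d j := mul_prod_erase univ d (mem_univ i)

lemma isClosed_setOf_posSemidef : IsClosed {Z : Matrix ι ι ℝ | Z.PosSemidef} := by
  simp only [posSemidef_iff_dotProduct_mulVec, Set.ofPred_and, Set.ofPred_forall]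
  exact (isClosed_eq (by fun_prop) continuous_id).inter
    (isClosed_iInter fun x => isClosed_le continuous_const (by fun_prop))

lemma isCompact_closure_of_le_det_of_abs_le [DecidableEq ι]
    {s : Set {Y : Matrix ι ι ℝ // Y.PosDef}} {δ B : ℝ} (hδ : 0 < δ)
    (hdet : ∀ Y ∈ s, δ ≤ Y.1.det) (habs : ∀ Y ∈ s, ∀ i j, |Y.1 i j| ≤ B) :
    IsCompact (closure s) := by
  set K := {Z : Matrix ι ι ℝ | Z.PosSemidef ∧ δ ≤ Z.det ∧ ∀ i j, |Z i j| ≤ B}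
  have hK : IsCompact K := by
    refine (isCompact_univ_pi fun _ => isCompact_univ_pi fun _ => isCompact_Icc (a := -B) (b := B))
      |>.of_isClosed_subset ?_ fun Z hZ i _ j _ => abs_le.mp (hZ.2.2 i j)
    simp only [K, Set.ofPred_and, Set.ofPred_forall]
    exact isClosed_setOf_posSemidef.inter <| (isClosed_le continuous_const (by fun_prop)).inter <|
      isClosed_iInter fun i => isClosed_iInter fun j => isClosed_le (by fun_prop) continuous_const
  have hK_posDef : K ⊆ {Z | Z.PosDef} := fun Z hZ =>
    hZ.1.posDef_iff_det_ne_zero.mpr (hδ.trans_le hZ.2.1).ne'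
  have hK' : IsCompact (Subtype.val ⁻¹' K : Set {Y : Matrix ι ι ℝ // Y.PosDef}) := by
    rwa [Subtype.isCompact_iff, Set.image_preimage_eq_of_subset (by simpa using hK_posDef)]
  exact hK'.closure_of_subset fun Y hY => ⟨Y.2.posSemidef, hdet Y hY, habs Y hY⟩

end Compactness

end HermiteMahler

open HermiteMahler in
theorem hermite_mahler_compactness_general (n : ℕ)
    (M : Set {Y : Matrix (Fin n) (Fin n) ℝ // Y.PosDef})
    -- every element of `M` lies in Minkowski's fundamental domain:
    (hMink₂ : ∀ Y ∈ M, ∀ k : Fin n, ∀ a : Fin n → ℤ,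
      (Finset.univ.filter (fun j : Fin n => k ≤ j)).gcd (fun j => (a j).natAbs) = 1 →
      Y.val k k ≤ (fun i => (a i : ℝ)) ⬝ᵥ Y.val *ᵥ (fun i => (a i : ℝ)))
    (C₀ C₁ : ℝ) (hC₀ : 0 < C₀)
    -- first minimum bounded below:
    (hm : ∀ Y ∈ M, ∀ a : Fin n → ℤ, a ≠ 0 →
      C₀ ≤ (fun i => (a i : ℝ)) ⬝ᵥ Y.val *ᵥ (fun i => (a i : ℝ)))
    -- determinant bounded above:
    (hdet : ∀ Y ∈ M, Y.val.det ≤ C₁) :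
    IsCompact (closure M) := by
  obtain ⟨c, hc⟩ := exists_prod_diag_le_det n
  obtain ⟨κ, hκ0, hκ⟩ := exists_hermite_constant (ι := Fin n)
  have hdiag : ∀ Y ∈ M, ∀ i, Y.1 i i ≤ c * C₁ / C₀ ^ (n - 1) := fun Y hY i => by
    have hprod := hc Y.1 Y.2 (hMink₂ Y hY)
    have hc0 : 0 ≤ c := nonneg_of_mul_nonneg_left
      ((prod_pos fun j _ => Y.2.diag_pos).le.trans hprod) Y.2.det_pos
    rw [le_div_iff₀ (by positivity)]
    calc Y.1 i i * C₀ ^ (n - 1) ≤ ∏ j, Y.1 j j := by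
          simpa using
            mul_pow_card_sub_one_le_prod hC₀.le (le_diag_of_forall_le_dotProduct (hm Y hY)) i
      _ ≤ c * C₁ := hprod.trans (mul_le_mul_of_nonneg_left (hdet Y hY) hc0)
  exact isCompact_closure_of_le_det_of_abs_le (δ := κ * C₀ ^ n) (by positivity)
    (fun Y hY => by simpa using hκ Y.1 Y.2 C₀ hC₀ (hm Y hY)) fun Y hY i j =>
      (IsReduced.abs_le_diag Y.2 (hMink₂ Y hY) (le_max_left i j) (le_max_right i j)).trans
        (hdiag Y hY _)

theorem hermite_mahler_compactness (n : ℕ)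
    (M : Set {Y : Matrix (Fin n) (Fin n) ℝ // Y.PosDef})
    -- every element of `M` lies in Minkowski's fundamental domain:
    (hMink₁ : ∀ Y ∈ M, ∀ k : Fin n, ∀ h : (k : ℕ) + 1 < n, 0 ≤ Y.val k ⟨k + 1, h⟩)
    (hMink₂ : ∀ Y ∈ M, ∀ k : Fin n, ∀ a : Fin n → ℤ,
      (Finset.univ.filter (fun j : Fin n => k ≤ j)).gcd (fun j => (a j).natAbs) = 1 →
      Y.val k k ≤ (fun i => (a i : ℝ)) ⬝ᵥ Y.val *ᵥ (fun i => (a i : ℝ)))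
    (C₀ C₁ : ℝ) (hC₀ : 0 < C₀) (hC₁ : 0 < C₁)
    -- first minimum bounded below:
    (hm : ∀ Y ∈ M, ∀ a : Fin n → ℤ, a ≠ 0 →
      C₀ ≤ (fun i => (a i : ℝ)) ⬝ᵥ Y.val *ᵥ (fun i => (a i : ℝ)))
    -- determinant bounded above:
    (hdet : ∀ Y ∈ M, Y.val.det ≤ C₁) :
    IsCompact (closure M) :=
  hermite_mahler_compactness_general n M hMink₂ C₀ C₁ hC₀ hm hdet
end
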